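/- arXiv:1008.1592 — 2 statements merged into one kernel-verified Lean document; each statement's English description precedes it below -/
import Mathlib

section
/- Let c(X) = (1+X)(1−X)^{−1} be the Cayley map. The pushforward under c of the restriction of μ to 𝔭 equals the restriction to 1 + 𝔭 of the multiplicative Haar measure d^×x = |x|^{−1} dμ(x); equivalently, for every function f : K → ℂ integrable on 1 + 𝔭 with respect to d^×x, ∫_{1+𝔭} f(x) d^×x = ∫_{𝔭} f(c(X)) dμ(X). -/
open MeasureTheory
open scoped Classical

noncomputable section

variable {K : Type}

/-- The Cayley map `X ↦ (1 + X)(1 - X)⁻¹`. -/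
def cay [Field K] (X : K) : K := (1 + X) * (1 - X)⁻¹

/-- `pSet q i` is the `i`-th power `𝔭^i` of the maximal ideal, as a subset of `K`:
the set of `x` with `‖x‖ ≤ q ^ (-i)` (for `i = 0` this is the ring of integers `O`). -/
def pSet [NormedField K] (q : ℕ) (i : ℤ) : Set K := {x | ‖x‖ ≤ (q : ℝ) ^ (-i)}

/-- `R` is a set of representatives in `O` for the residue field `O/𝔭`. -/
def IsResidueSystem [NormedField K] (R : Finset K) : Prop :=
  (∀ x ∈ R, ‖x‖ ≤ 1) ∧ ∀ y : K, ‖y‖ ≤ 1 → ∃! x, x ∈ R ∧ ‖y - x‖ < 1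

/-- `R` is a set of representatives for `𝔭^i/𝔭^(i+1)`. -/
def IsPResidueSystem [NormedField K] (q : ℕ) (i : ℤ) (R : Finset K) : Prop :=
  (∀ x ∈ R, ‖x‖ ≤ (q : ℝ) ^ (-i)) ∧
    ∀ y : K, ‖y‖ ≤ (q : ℝ) ^ (-i) → ∃! c, c ∈ R ∧ ‖y - c‖ ≤ (q : ℝ) ^ (-(i + 1))

/-- The quadratic character `η` of the residue field, evaluated at the residue of a unit
`u` of `O`: it is `1` if `u` is a square modulo the maximal ideal and `-1` otherwise. -/
def etaK [NormedField K] (u : K) : ℂ := if ∃ y : K, ‖y * y - u‖ < 1 then 1 else -1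

/-- The character `sgn_ϖ` of `K^×`: `sgn_ϖ(uϖ^n) = η(ū)·η(-1)^n` for `u ∈ O^×`, `n ∈ ℤ`. -/
def sgnP [NormedField K] (ord : K → ℤ) (ϖ : K) (x : K) : ℂ :=
  etaK (x * ϖ ^ (-ord x)) * etaK (-1 : K) ^ ord x

/-- The unramified quadratic character `sgn_ε(x) = (-1)^(ord x)`. -/
def sgnE [NormedField K] (ord : K → ℤ) (x : K) : ℂ := (-1 : ℂ) ^ ord x

/-- `ν^{1/2}(x) = |x|^{1/2}`. -/
def nuHalf [NormedField K] (x : K) : ℂ := (Real.sqrt ‖x‖ : ℂ)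

/-- The normalized Gauss sum `G_{ϖ'}(Ψ) = q^{-1/2} Σ_{X ∈ O/𝔭} Ψ((-ϖ')^d · X²)`,
where `d` is the depth of `Ψ`, computed using the residue system `R`. -/
def gaussSumK [NormedField K] (q : ℕ) (Ψ : K → ℂ) (ϖ' : K) (d : ℤ) (R : Finset K) : ℂ :=
  (Real.sqrt q : ℂ)⁻¹ * ∑ X ∈ R, Ψ ((-ϖ') ^ d * X ^ 2)

/-- The `p`-adic Bessel function `J_χ(u,v)`: the unconditional sum over `n ∈ ℤ` of the
integrals of `Φ(ux + vx⁻¹)·χ(x)` over the shells `{ord x = n}` against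
`d^×x = ‖x‖⁻¹ dμ(x)`. -/
def bessel [NormedField K] [MeasurableSpace K] (μ : Measure K) (Φ : K → ℂ)
    (ord : K → ℤ) (χ : K → ℂ) (u v : K) : ℂ :=
  ∑' n : ℤ, ∫ x in {x : K | x ≠ 0 ∧ ord x = n},
    Φ (u * x + v * x⁻¹) * χ x * (‖x‖ : ℂ)⁻¹ ∂μ

/-- The character `sgn_θ` of `K^×`: identically `1` if `θ` is a square, and otherwise
the character whose kernel is exactly the set of nonzero values of the norm form
`a² - b²θ`. -/
def sgnTheta [Field K] (θ : K) (x : K) : ℂ :=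
  if ∃ a b : K, x = a ^ 2 - b ^ 2 * θ then 1 else -1

/-- `J^θ_χ = (J_χ + J_{χ·sgn_θ})/2`. -/
def besselTheta [NormedField K] [MeasurableSpace K] (μ : Measure K) (Φ : K → ℂ)
    (ord : K → ℤ) (θ : K) (χ : K → ℂ) (u v : K) : ℂ :=
  (bessel μ Φ ord χ u v + bessel μ Φ ord (fun x => χ x * sgnTheta θ x) u v) / 2

/-- The mock Fourier transform `M(Y)` of the orbital integral of `X* = β·√θ`, evaluated at
`Y = s·√θ'`: the unconditional sum over `n ∈ ℤ` of the integrals over the parts of the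
shells `{ord x = n}` lying in the image of the norm form `a² - b²θ`, against
`d^×x = ‖x‖⁻¹ dμ(x)`, of the unconditional sums over `k ∈ ℤ` of the integrals of
`Φ(βs(xθ' + x⁻¹θ - x⁻¹t²))` over the shells `{ord t = k}` against `dμ(t)`. -/
def mockM [NormedField K] [MeasurableSpace K] (μ : Measure K) (Φ : K → ℂ)
    (ord : K → ℤ) (θ β s θ' : K) : ℂ :=
  ∑' n : ℤ, ∫ x in {x : K | (x ≠ 0 ∧ ord x = n) ∧ ∃ a b : K, x = a ^ 2 - b ^ 2 * θ},
      (∑' k : ℤ, ∫ t in {t : K | t ≠ 0 ∧ ord t = k},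
          Φ (β * s * (x * θ' + x⁻¹ * θ - x⁻¹ * t ^ 2)) ∂μ) * (‖x‖ : ℂ)⁻¹ ∂μ

/-- The standard torus `T_θ ≤ SL₂(K)`, as a set of matrices. -/
def torusSet [Field K] (θ : K) : Set (Matrix (Fin 2) (Fin 2) K) :=
  {A | ∃ a b : K, a ^ 2 - b ^ 2 * θ = 1 ∧ A = Matrix.of ![![a, b], ![b * θ, a]]}

/-- `Q₃(T) = -T(T² + T + 1)`. -/
def Q3 (T : ℂ) : ℂ := -T * (T ^ 2 + T + 1)


/-! Since the residue field has odd order, `‖2‖ = 1`, and then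
`c(X) - c(Y) = 2(X - Y)/((1 - X)(1 - Y))` shows that the Cayley map is an isometry of `𝔭` onto
`1 + 𝔭`. In an ultrametric space the closed balls form a π-system generating the Borel sets, and
an isometry between two balls of the same radius carries subballs to subballs of the same radius,
so by translation invariance it carries `μ` on the one ball to `μ` on the other. Finally `|x| = 1`
on `1 + 𝔭`, so `d^×x` and `μ` agree there. -/

open Metric Set TopologicalSpace

theorem Finset.even_card_of_involution {α : Type*} {s : Finset α} (σ : α → α)
    (hmem : ∀ a ∈ s, σ a ∈ s) (hne : ∀ a ∈ s, σ a ≠ a) (hinv : ∀ a ∈ s, σ (σ a) = a) :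
    Even s.card := by
  rw [← ZMod.natCast_eq_zero_iff_even, Finset.card_eq_sum_ones, Nat.cast_sum, Nat.cast_one]
  exact Finset.sum_involution (fun a _ => σ a) (fun _ _ => by decide) (fun a ha _ => hne a ha)
    hmem hinv

theorem Metric.closedBall_inter_closedBall_self {X : Type*} [PseudoMetricSpace X] (x : X)
    (r s : ℝ) : closedBall x r ∩ closedBall x s = closedBall x (min r s) := by
  ext
  simp only [mem_inter_iff, mem_closedBall, le_min_iff]

theorem measure_closedBall_eq_of_isAddLeftInvariant {E : Type*} [SeminormedAddCommGroup E]
    [MeasurableSpace E] [MeasurableAdd E] (μ : Measure E) [μ.IsAddLeftInvariant] (x y : E)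
    (r : ℝ) : μ (closedBall x r) = μ (closedBall y r) := by
  have := measure_preimage_add μ (x - y) (closedBall x r)
  rwa [preimage_add_closedBall, sub_sub_cancel, eq_comm] at this

namespace IsUltrametricDist

theorem norm_eq_of_norm_sub_lt {S : Type*} [SeminormedAddGroup S] [IsUltrametricDist S]
    {x y : S} (h : ‖x - y‖ < ‖y‖) : ‖x‖ = ‖y‖ := by
  have := norm_add_eq_max_of_norm_ne_norm h.ne
  rwa [sub_add_cancel, max_eq_right h.le] at this

theorem norm_eq_one_of_norm_sub_one_lt {R : Type*} [SeminormedRing R] [NormOneClass R]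
    [IsUltrametricDist R] {x : R} (h : ‖x - 1‖ < 1) : ‖x‖ = 1 :=
  norm_one (α := R) ▸ norm_eq_of_norm_sub_lt (by rwa [norm_one])

section Metric

variable {X : Type*} [PseudoMetricSpace X] [IsUltrametricDist X]

theorem isTopologicalBasis_closedBall :
    IsTopologicalBasis {s : Set X | ∃ c r, 0 < r ∧ s = closedBall c r} := by
  refine isTopologicalBasis_of_isOpen_of_nhds ?_ fun a u hau hu => ?_
  · rintro _ ⟨c, r, hr, rfl⟩
    exact isOpen_closedBall c hr.ne'
  · obtain ⟨ε, hε, hball⟩ := Metric.isOpen_iff.mp hu a hau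
    exact ⟨closedBall a (ε / 2), ⟨a, ε / 2, half_pos hε, rfl⟩,
      mem_closedBall_self (half_pos hε).le, (closedBall_subset_ball (half_lt_self hε)).trans hball⟩

theorem isPiSystem_closedBall :
    IsPiSystem {s : Set X | ∃ c r, 0 < r ∧ s = closedBall c r} := by
  rintro _ ⟨c, r, hr, rfl⟩ _ ⟨c', r', hr', rfl⟩ ⟨x, hx, hx'⟩
  refine ⟨x, min r r', lt_min hr hr', ?_⟩
  rw [closedBall_eq_of_mem hx, closedBall_eq_of_mem hx', closedBall_inter_closedBall_self]

end Metric

variable {E : Type*} [SeminormedAddCommGroup E] [IsUltrametricDist E] [SecondCountableTopology E]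
  [MeasurableSpace E] [BorelSpace E]

theorem map_restrict_closedBall_of_isometryOn (μ : Measure E) [μ.IsAddLeftInvariant]
    {f : E → E} (hf : Measurable f) {a b : E} {r : ℝ} (hμ : μ (closedBall a r) ≠ ⊤)
    (hmaps : MapsTo f (closedBall a r) (closedBall b r))
    (hsurj : SurjOn f (closedBall a r) (closedBall b r))
    (hdist : ∀ x ∈ closedBall a r, ∀ y ∈ closedBall a r, dist (f x) (f y) = dist x y) :
    (μ.restrict (closedBall a r)).map f = μ.restrict (closedBall b r) := by
  have : IsFiniteMeasure (μ.restrict (closedBall a r)) := isFiniteMeasure_restrict.mpr hμ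
  refine ext_of_generate_finite _
    (BorelSpace.measurable_eq.trans isTopologicalBasis_closedBall.borel_eq_generateFrom)
    isPiSystem_closedBall ?_ ?_
  · rintro _ ⟨c, s, -, rfl⟩
    rw [Measure.map_apply hf measurableSet_closedBall,
      Measure.restrict_apply (hf measurableSet_closedBall),
      Measure.restrict_apply measurableSet_closedBall]
    rcases (closedBall c s ∩ closedBall b r).eq_empty_or_nonempty with hempty | ⟨y, hyc, hyb⟩
    · have hpre : f ⁻¹' closedBall c s ∩ closedBall a r = ∅ :=
        eq_empty_of_forall_notMem fun x hx => hempty.subset ⟨hx.1, hmaps hx.2⟩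
      rw [hempty, hpre]
    · obtain ⟨x, hxa, rfl⟩ := hsurj hyb
      have hpre : f ⁻¹' closedBall c s ∩ closedBall a r = closedBall x s ∩ closedBall x r := by
        rw [closedBall_eq_of_mem hyc, closedBall_eq_of_mem hxa]
        ext z
        simp only [mem_inter_iff, mem_preimage, mem_closedBall, and_congr_left_iff]
        intro hz
        rw [hdist z ((closedBall_eq_of_mem hxa).symm ▸ hz) x hxa]
      rw [hpre, closedBall_eq_of_mem hyc, closedBall_eq_of_mem hyb,
        closedBall_inter_closedBall_self, closedBall_inter_closedBall_self,
        measure_closedBall_eq_of_isAddLeftInvariant μ x (f x)]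
  · rw [Measure.map_apply hf MeasurableSet.univ, preimage_univ, Measure.restrict_apply_univ,
      Measure.restrict_apply_univ, measure_closedBall_eq_of_isAddLeftInvariant μ a b]

end IsUltrametricDist

section Cayley

theorem cay_zero [Field K] : cay (0 : K) = 1 := by
  simp [cay]

theorem cay_sub_cay [Field K] {X Y : K} (hX : 1 - X ≠ 0) (hY : 1 - Y ≠ 0) :
    cay X - cay Y = 2 * (X - Y) / ((1 - X) * (1 - Y)) := by
  unfold cay
  field_simp
  ring

theorem cay_sub_one_div_add_one [Field K] {c : K} (h2 : (2 : K) ≠ 0) (hc : c + 1 ≠ 0) :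
    cay ((c - 1) / (c + 1)) = c := by
  have h1 : 1 - (c - 1) / (c + 1) = 2 / (c + 1) := by field_simp; ring
  rw [cay, h1]
  field_simp
  ring

theorem measurable_cay [NormedField K] [MeasurableSpace K] [BorelSpace K]
    [SecondCountableTopology K] : Measurable (cay : K → K) := by
  unfold cay
  fun_prop

variable [NormedField K] [IsUltrametricDist K]

theorem IsUltrametricDist.norm_two_eq_one_of_odd_card {R : Finset K} (hR : IsResidueSystem R)
    (hodd : Odd R.card) : ‖(2 : K)‖ = 1 := by
  refine (by simpa using norm_natCast_le_one K 2 : ‖(2 : K)‖ ≤ 1).antisymm (not_lt.mp fun h2 => ?_)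
  have hrep : ∀ a ∈ R, ∃! b, b ∈ R ∧ ‖a + 1 - b‖ < 1 := fun a ha =>
    hR.2 _ ((norm_add_le_max a 1).trans (by simpa using hR.1 a ha))
  choose! σ hσ using fun a ha => (hrep a ha).exists
  -- if `‖2‖ < 1`, then `a ↦ a + 1` induces a fixed-point-free involution of `O/𝔭`
  refine Nat.not_even_iff_odd.mpr hodd (Finset.even_card_of_involution σ (fun a ha => (hσ a ha).1)
    (fun a ha hfix => ?_) (fun a ha => ?_))
  · simpa [hfix] using (hσ a ha).2
  · refine (hrep _ (hσ a ha).1).unique (hσ _ (hσ a ha).1) ⟨ha, ?_⟩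
    rw [show σ a + 1 - a = 2 + (σ a - (a + 1)) by ring]
    exact (norm_add_le_max _ _).trans_lt (max_lt h2 (by rw [norm_sub_rev]; exact (hσ a ha).2))

variable (h2 : ‖(2 : K)‖ = 1)
include h2

theorem dist_cay_cay {X Y : K} (hX : ‖X‖ < 1) (hY : ‖Y‖ < 1) :
    dist (cay X) (cay Y) = dist X Y := by
  have hX' : ‖1 - X‖ = 1 := IsUltrametricDist.norm_eq_one_of_norm_sub_one_lt (by simpa using hX)
  have hY' : ‖1 - Y‖ = 1 := IsUltrametricDist.norm_eq_one_of_norm_sub_one_lt (by simpa using hY)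
  have hX0 : 1 - X ≠ 0 := norm_ne_zero_iff.mp (by rw [hX']; exact one_ne_zero)
  have hY0 : 1 - Y ≠ 0 := norm_ne_zero_iff.mp (by rw [hY']; exact one_ne_zero)
  rw [dist_eq_norm, dist_eq_norm, cay_sub_cay hX0 hY0, norm_div, norm_mul, norm_mul, h2, hX', hY']
  simp

theorem mapsTo_cay_closedBall {r : ℝ} (hr : r < 1) :
    MapsTo cay (closedBall (0 : K) r) (closedBall 1 r) := by
  intro X hX
  rw [mem_closedBall, ← cay_zero, dist_cay_cay h2 (by simpa using hX.out.trans_lt hr) (by simp)]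
  exact hX

theorem surjOn_cay_closedBall {r : ℝ} (hr : r < 1) :
    SurjOn cay (closedBall (0 : K) r) (closedBall 1 r) := by
  intro c hc
  have hc1 : ‖c - 1‖ ≤ r := by simpa [dist_eq_norm] using hc
  have hc2 : ‖c + 1‖ = 1 := by
    rw [← h2]
    refine IsUltrametricDist.norm_eq_of_norm_sub_lt ?_
    rw [h2, show c + 1 - 2 = c - 1 by ring]
    exact hc1.trans_lt hr
  refine ⟨(c - 1) / (c + 1), ?_, cay_sub_one_div_add_one ?_ ?_⟩
  · simpa [norm_div, hc2] using hc1
  · exact norm_ne_zero_iff.mp (by rw [h2]; exact one_ne_zero)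
  · exact norm_ne_zero_iff.mp (by rw [hc2]; exact one_ne_zero)

theorem map_cay_restrict_closedBall [SecondCountableTopology K] [MeasurableSpace K]
    [BorelSpace K] (μ : Measure K) [μ.IsAddLeftInvariant] {r : ℝ} (hr : r < 1)
    (hμ : μ (closedBall 0 r) ≠ ⊤) :
    (μ.restrict (closedBall 0 r)).map cay = μ.restrict (closedBall 1 r) :=
  IsUltrametricDist.map_restrict_closedBall_of_isometryOn μ measurable_cay hμ
    (mapsTo_cay_closedBall h2 hr) (surjOn_cay_closedBall h2 hr) fun X hX Y hY =>
      dist_cay_cay h2 (by simpa using hX.out.trans_lt hr) (by simpa using hY.out.trans_lt hr)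

end Cayley

theorem restrict_withDensity_norm_inv {E : Type*} [Norm E] [MeasurableSpace E] (μ : Measure E)
    {s : Set E} (hs : MeasurableSet s) (hnorm : ∀ x ∈ s, ‖x‖ = 1) :
    (μ.withDensity fun x => ENNReal.ofReal ‖x‖⁻¹).restrict s = μ.restrict s := by
  rw [restrict_withDensity hs]
  conv_rhs => rw [← withDensity_one (μ := μ.restrict s)]
  refine withDensity_congr_ae ((ae_restrict_iff' hs).mpr (.of_forall fun x hx => ?_))
  simp [hnorm x hx]

theorem cayley_map_measure_general
    [NontriviallyNormedField K] [IsUltrametricDist K]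
    [LocallyCompactSpace K] [MeasurableSpace K] [BorelSpace K]
    (q : ℕ) (hq_odd : Odd q) (hq_one : 1 < q)
    (hfin : ∃ R : Finset K, IsResidueSystem R ∧ R.card = q)
    (μ : Measure K) [μ.IsAddHaarMeasure] :
    (Measure.map (cay : K → K) (μ.restrict (pSet q 1)) =
        (μ.withDensity fun x => ENNReal.ofReal ‖x‖⁻¹).restrict
          {x : K | x - 1 ∈ pSet q 1}) ∧
      ∀ f : K → ℂ,
        IntegrableOn f {x : K | x - 1 ∈ pSet q 1}
            (μ.withDensity fun x => ENNReal.ofReal ‖x‖⁻¹) →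
          ∫ x in {x : K | x - 1 ∈ pSet q 1}, f x
              ∂(μ.withDensity fun x => ENNReal.ofReal ‖x‖⁻¹) =
            ∫ X in pSet q 1, f (cay X) ∂μ := by
  have : ProperSpace K := .of_nontriviallyNormedField_of_weaklyLocallyCompactSpace K
  obtain ⟨R, hR, hcard⟩ := hfin
  have h2 : ‖(2 : K)‖ = 1 := IsUltrametricDist.norm_two_eq_one_of_odd_card hR (hcard ▸ hq_odd)
  have hρ : (q : ℝ)⁻¹ < 1 := inv_lt_one_of_one_lt₀ (by exact_mod_cast hq_one)
  have hP : pSet q 1 = closedBall (0 : K) (q : ℝ)⁻¹ := by ext; simp [pSet]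
  have hS : {x : K | x - 1 ∈ pSet q 1} = closedBall 1 (q : ℝ)⁻¹ := by
    ext; simp [pSet, dist_eq_norm]
  have hmap : (μ.restrict (pSet q 1)).map cay =
      (μ.withDensity fun x => ENNReal.ofReal ‖x‖⁻¹).restrict {x : K | x - 1 ∈ pSet q 1} := by
    rw [hS, hP, map_cay_restrict_closedBall h2 μ hρ measure_closedBall_lt_top.ne,
      restrict_withDensity_norm_inv μ measurableSet_closedBall]
    exact fun x hx => IsUltrametricDist.norm_eq_one_of_norm_sub_one_lt
      (by simpa [dist_eq_norm] using hx.out.trans_lt hρ)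
  refine ⟨hmap, fun f hf => ?_⟩
  rw [IntegrableOn, ← hmap] at hf
  rw [← hmap]
  exact integral_map measurable_cay.aemeasurable hf.aestronglyMeasurable

/-- the Cayley map carries the additive Haar measure on `𝔭` to the
multiplicative Haar measure `d^×x = |x|⁻¹ dμ(x)` on `1 + 𝔭`. -/
theorem cayley_map_measure
    [NontriviallyNormedField K] [IsUltrametricDist K]
    [CompleteSpace K] [LocallyCompactSpace K] [MeasurableSpace K] [BorelSpace K]
    (q : ℕ) (hq_odd : Odd q) (hq_one : 1 < q)
    (hfin : ∃ R : Finset K, IsResidueSystem R ∧ R.card = q)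
    (ord : K → ℤ) (hord : ∀ x : K, x ≠ 0 → ‖x‖ = (q : ℝ) ^ (-ord x))
    (ϖ : K) (hϖ0 : ϖ ≠ 0) (hϖ1 : ord ϖ = 1)
    (μ : Measure K) [μ.IsAddHaarMeasure] (hμO : μ {x : K | ‖x‖ ≤ 1} = 1) :
    (Measure.map (cay : K → K) (μ.restrict (pSet q 1)) =
        (μ.withDensity fun x => ENNReal.ofReal ‖x‖⁻¹).restrict
          {x : K | x - 1 ∈ pSet q 1}) ∧
      ∀ f : K → ℂ,
        IntegrableOn f {x : K | x - 1 ∈ pSet q 1}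
            (μ.withDensity fun x => ENNReal.ofReal ‖x‖⁻¹) →
          ∫ x in {x : K | x - 1 ∈ pSet q 1}, f x
              ∂(μ.withDensity fun x => ENNReal.ofReal ‖x‖⁻¹) =
            ∫ X in pSet q 1, f (cay X) ∂μ :=
  cayley_map_measure_general q hq_odd hq_one hfin μ
end
end

section
/- Let Ψ : K → ℂ^× be a nontrivial locally constant additive character of depth −1 (trivial on O, nontrivial on ϖ^{−1}O). Then in the principal-value integral Σ_{n ∈ ℤ} ∫_{{x : ord(x) = n}} Ψ(x)·|x|^{1/2}·sgn_ϖ(x) d^×x, the shell integral ∫_{{x : ord(x) = n}} Ψ(x)|x|^{1/2}sgn_ϖ(x) d^×x vanishes for every n ≠ −1, and the total sum equals the normalized Gauss sum G_ϖ(Ψ). (This is the evaluation Γ(ν^{1/2}·sgn_ϖ) = sgn_ϖ(−1)^{d(Φ)+1}·G_ϖ(Φ) of the Sally–Taibleson Γ-factor.) -/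
open MeasureTheory
open scoped Classical

noncomputable section

variable {K : Type}

/-!
The shell `{ord x = n}` is the disjoint union of the balls `ϖⁿa + 𝔭ⁿ⁺¹ = B(ϖⁿa, |ϖⁿ|)`, `a` running
over the unit representatives of the residue field. On such a ball `|x| = q⁻ⁿ` and
`sgn_ϖ x = η(-1)ⁿ η(a)`, so translating the ball to `𝔭ⁿ⁺¹` turns the shell integral into
`q^(n/2) η(-1)ⁿ (∑ₐ η(a) Ψ(ϖⁿa)) ∫_{𝔭ⁿ⁺¹} Ψ`.
For `n ≤ -2` the group `𝔭ⁿ⁺¹ ⊇ 𝔭⁻¹` contains a point where `Ψ ≠ 1`, so the integral of the character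
vanishes; for `n ≥ 0` every `Ψ(ϖⁿa)` is `1` and `∑ₐ η(a) = 0`. For `n = -1` the depth condition
says that `X ↦ Ψ(ϖ⁻¹X)` descends to a nontrivial additive character `ψ` of the residue field, the
sum becomes the Gauss sum `g(η, ψ)`, and `∑_X ψ(-X²) = η(-1) g(η, ψ)` identifies the result with
`G_ϖ(Ψ)`.
-/

open Metric Filter Topology

theorem IsUltrametricDist.norm_eq_of_norm_sub_lt_right {S : Type*} [SeminormedAddGroup S]
    [IsUltrametricDist S] {x y : S} (h : ‖x - y‖ < ‖y‖) : ‖x‖ = ‖y‖ := by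
  simpa [max_eq_right h.le] using norm_add_eq_max_of_norm_ne_norm h.ne

namespace AddChar

theorem continuous_of_eventually_eq_one {E M : Type*} [AddGroup E] [TopologicalSpace E]
    [IsTopologicalAddGroup E] [Monoid M] [TopologicalSpace M] (ψ : AddChar E M)
    (h : ∀ᶠ x in 𝓝 0, ψ x = 1) : Continuous ψ := by
  refine continuous_iff_continuousAt.2 fun a => (continuousAt_const (y := ψ a)).congr ?_
  have hsub : Tendsto (· - a) (𝓝 a) (𝓝 0) := by
    simpa using (continuous_sub_right a).tendsto a
  filter_upwards [hsub.eventually h] with y hy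
  rw [← sub_add_cancel y a, map_add_eq_mul, hy, one_mul]

section Haar

variable {E : Type*} [NormedAddCommGroup E] [MeasurableSpace E] [BorelSpace E]
  (μ : Measure E) [μ.IsAddLeftInvariant]

theorem setIntegral_ball_eq_mul (ψ : AddChar E ℂ) (c : E) (r : ℝ) :
    ∫ x in ball c r, ψ x ∂μ = ψ c * ∫ x in ball 0 r, ψ x ∂μ := by
  have h := (measurePreserving_add_left μ c).setIntegral_preimage_emb
    (Homeomorph.addLeft c).measurableEmbedding ψ (ball c r)
  rw [preimage_add_left_ball, neg_add_cancel] at h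
  simp only [map_add_eq_mul] at h
  rw [← h, integral_const_mul]

theorem setIntegral_ball_eq_zero [IsUltrametricDist E] (ψ : AddChar E ℂ) {z : E} {r : ℝ}
    (hz : ‖z‖ < r) (hψz : ψ z ≠ 1) : ∫ x in ball 0 r, ψ x ∂μ = 0 := by
  have h := ψ.setIntegral_ball_eq_mul μ z r
  rw [← IsUltrametricDist.ball_eq_of_mem (mem_ball_zero_iff.mpr hz)] at h
  exact eq_zero_of_mul_eq_self_left hψz h.symm

end Haar

theorem mulShift_ne_zero {F : Type*} [Field F] {ψ : AddChar F ℂ} (hψ : ψ ≠ 0) {a : F}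
    (ha : a ≠ 0) : ψ.mulShift a ≠ 0 := by
  contrapose! hψ
  ext y
  simpa [mul_inv_cancel_left₀ ha] using DFunLike.congr_fun hψ (a⁻¹ * y)

end AddChar

section QuadraticGaussSum

open Finset

variable {F : Type*} [Field F] [Fintype F] [DecidableEq F]

theorem sum_addChar_sq_eq_gaussSum (hF : ringChar F ≠ 2) {ψ : AddChar F ℂ} (hψ : ψ ≠ 0) :
    ∑ x, ψ (x ^ 2) = gaussSum ((quadraticChar F).ringHomComp (Int.castRingHom ℂ)) ψ := by
  have hfiber (u : F) : (#{x : F | x ^ 2 = u} : ℂ) = quadraticChar F u + 1 := by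
    have := quadraticChar_card_sqrts hF u
    rw [Set.toFinset_ofPred] at this
    exact_mod_cast this
  calc ∑ x, ψ (x ^ 2) = ∑ u, ∑ x with x ^ 2 = u, ψ u := by
        rw [← sum_fiberwise univ (· ^ 2) fun x => ψ (x ^ 2)]
        exact sum_congr rfl fun u _ => sum_congr rfl fun x hx => by rw [(mem_filter.mp hx).2]
    _ = ∑ u, (quadraticChar F u * ψ u + ψ u) := by
        refine sum_congr rfl fun u _ => ?_
        rw [sum_const, nsmul_eq_mul, hfiber, add_mul, one_mul]
    _ = _ := by
        rw [sum_add_distrib, AddChar.sum_eq_zero_iff_ne_zero.mpr hψ, add_zero]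
        rfl

theorem sum_addChar_mul_sq (hF : ringChar F ≠ 2) {ψ : AddChar F ℂ} (hψ : ψ ≠ 0) {a : F}
    (ha : a ≠ 0) :
    ∑ x, ψ (a * x ^ 2) =
      quadraticChar F a * gaussSum ((quadraticChar F).ringHomComp (Int.castRingHom ℂ)) ψ := by
  have hshift := gaussSum_mulShift ((quadraticChar F).ringHomComp (Int.castRingHom ℂ)) ψ
    (Units.mk0 a ha)
  have hsq : (quadraticChar F a : ℂ) ^ 2 = 1 := by exact_mod_cast quadraticChar_sq_one ha
  simp only [Units.val_mk0, MulChar.ringHomComp_apply, eq_intCast] at hshift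
  rw [← hshift, ← mul_assoc, ← sq, hsq, one_mul,
    ← sum_addChar_sq_eq_gaussSum hF (AddChar.mulShift_ne_zero hψ ha)]
  rfl

end QuadraticGaussSum

section NormedField

open IsUltrametricDist

variable [NormedField K]

theorem IsResidueSystem.eq_of_norm_sub_lt_one {R : Finset K} (hR : IsResidueSystem R) {a b : K}
    (ha : a ∈ R) (hb : b ∈ R) (hab : ‖a - b‖ < 1) : a = b :=
  (hR.2 a (hR.1 a ha)).unique ⟨ha, by simp⟩ ⟨hb, hab⟩

theorem etaK_inv (u : K) : (etaK u)⁻¹ = etaK u := by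
  unfold etaK
  split_ifs <;> norm_num

variable [IsUltrametricDist K]

theorem etaK_congr {u v : K} (h : ‖u - v‖ < 1) : etaK u = etaK v := by
  have hball : ball u 1 = ball v 1 :=
    ball_eq_of_mem (by rwa [mem_ball, dist_eq_norm, norm_sub_rev])
  simp only [etaK, ← dist_eq_norm, ← mem_ball, hball]

namespace IsResidueSystem

variable {R : Finset K}

theorem sphere_eq_biUnion_ball (hR : IsResidueSystem R) {c : K} (hc : c ≠ 0) :
    sphere (0 : K) ‖c‖ = ⋃ a ∈ R.filter (‖·‖ = 1), ball (c * a) ‖c‖ := by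
  have hc' : 0 < ‖c‖ := norm_pos_iff.mpr hc
  ext x
  simp only [mem_sphere_zero_iff_norm, Set.mem_iUnion, Finset.mem_filter, mem_ball,
    dist_eq_norm, exists_prop]
  constructor
  · intro hx
    have hy : ‖c⁻¹ * x‖ = 1 := by rw [norm_mul, norm_inv, hx, inv_mul_cancel₀ hc'.ne']
    obtain ⟨a, ⟨haR, hya⟩, -⟩ := hR.2 _ hy.le
    have ha : ‖a‖ = 1 := hy ▸ norm_eq_of_norm_sub_lt_right (by rwa [norm_sub_rev, hy])
    refine ⟨a, ⟨haR, ha⟩, ?_⟩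
    calc ‖x - c * a‖ = ‖c‖ * ‖c⁻¹ * x - a‖ := by
          rw [← norm_mul, mul_sub, mul_inv_cancel_left₀ hc]
      _ < ‖c‖ := mul_lt_of_lt_one_right hc' hya
  · rintro ⟨a, ⟨-, ha⟩, hxa⟩
    have hca : ‖c * a‖ = ‖c‖ := by rw [norm_mul, ha, mul_one]
    exact hca ▸ norm_eq_of_norm_sub_lt_right (hca ▸ hxa)

theorem pairwiseDisjoint_ball_mul (hR : IsResidueSystem R) {c : K} (hc : c ≠ 0) :
    (R : Set K).PairwiseDisjoint fun a => ball (c * a) ‖c‖ := by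
  intro a ha b hb hab
  refine Set.disjoint_left.mpr fun x hxa hxb => hab (hR.eq_of_norm_sub_lt_one ha hb ?_)
  have h : ‖c * a - c * b‖ < ‖c‖ := by
    rw [← dist_eq_norm]
    exact (IsUltrametricDist.dist_triangle_max _ x _).trans_lt
      (max_lt (mem_ball'.mp hxa) (mem_ball.mp hxb))
  rwa [← mul_sub, norm_mul, mul_lt_iff_lt_one_right (norm_pos_iff.mpr hc)] at h

theorem setIntegral_sphere [ProperSpace K] [MeasurableSpace K] [BorelSpace K]
    (hR : IsResidueSystem R) (μ : Measure K) [μ.IsAddHaarMeasure]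
    {ψ : AddChar K ℂ} (hψ : Continuous ψ) {c : K} (hc : c ≠ 0) {g : K → ℂ} (w : K → ℂ)
    (hg : ∀ a ∈ R, ‖a‖ = 1 → Set.EqOn g (fun x => w a * ψ x) (ball (c * a) ‖c‖)) :
    ∫ x in sphere 0 ‖c‖, g x ∂μ =
      (∑ a ∈ R with ‖a‖ = 1, w a * ψ (c * a)) * ∫ x in ball 0 ‖c‖, ψ x ∂μ := by
  have hint (a : K) : IntegrableOn ψ (ball (c * a) ‖c‖) μ :=
    (hψ.continuousOn.integrableOn_compact (isCompact_closedBall _ _)).mono_set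
      ball_subset_closedBall
  rw [hR.sphere_eq_biUnion_ball hc, integral_biUnion_finset _ (fun _ _ => measurableSet_ball)
    ((hR.pairwiseDisjoint_ball_mul hc).subset (Finset.coe_subset.mpr (Finset.filter_subset _ _))),
    Finset.sum_mul]
  · refine Finset.sum_congr rfl fun a ha => ?_
    obtain ⟨haR, ha1⟩ := Finset.mem_filter.mp ha
    rw [setIntegral_congr_fun measurableSet_ball (hg a haR ha1), integral_const_mul,
      ψ.setIntegral_ball_eq_mul μ, mul_assoc]
  · intro a ha
    obtain ⟨haR, ha1⟩ := Finset.mem_filter.mp ha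
    exact IntegrableOn.congr_fun ((hint a).const_mul (w a)) (hg a haR ha1).symm measurableSet_ball

end IsResidueSystem

end NormedField

section Uniformizer

variable [NormedField K] {q : ℕ} {ord : K → ℤ} {ϖ : K}

theorem ord_eq_of_norm_eq (hq : 1 < q) (hord : ∀ x : K, x ≠ 0 → ‖x‖ = (q : ℝ) ^ (-ord x))
    {x : K} (hx : x ≠ 0) {n : ℤ} (h : ‖x‖ = (q : ℝ) ^ (-n)) : ord x = n := by
  rw [hord x hx] at h
  have := zpow_right_injective₀ (by positivity) (by exact_mod_cast hq.ne') h
  omega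

theorem setOf_ord_eq_sphere (hq : 1 < q) (hord : ∀ x : K, x ≠ 0 → ‖x‖ = (q : ℝ) ^ (-ord x))
    (n : ℤ) :
    {x : K | x ≠ 0 ∧ ord x = n} = sphere 0 ((q : ℝ) ^ (-n)) := by
  ext x
  simp only [Set.mem_ofPred_eq, mem_sphere_zero_iff_norm]
  constructor
  · rintro ⟨hx, rfl⟩
    exact hord x hx
  · intro h
    have hx : x ≠ 0 := by
      rintro rfl
      exact (zpow_pos (by positivity : (0 : ℝ) < q) _).ne' (h.symm.trans norm_zero)
    exact ⟨hx, ord_eq_of_norm_eq hq hord hx h⟩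

theorem norm_le_zpow_of_norm_lt (hq : 1 < q) (hord : ∀ x : K, x ≠ 0 → ‖x‖ = (q : ℝ) ^ (-ord x))
    {x : K} {m : ℤ} (h : ‖x‖ < (q : ℝ) ^ (m + 1)) : ‖x‖ ≤ (q : ℝ) ^ m := by
  rcases eq_or_ne x 0 with rfl | hx
  · rw [norm_zero]
    positivity
  have hq' : (1 : ℝ) < q := by exact_mod_cast hq
  rw [hord x hx, zpow_lt_zpow_iff_right₀ hq'] at h
  rw [hord x hx]
  exact zpow_le_zpow_right₀ hq'.le (by omega)

theorem norm_zpow_eq_zpow_neg (hord : ∀ x : K, x ≠ 0 → ‖x‖ = (q : ℝ) ^ (-ord x)) (hϖ0 : ϖ ≠ 0)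
    (hϖ1 : ord ϖ = 1) (n : ℤ) : ‖ϖ ^ n‖ = (q : ℝ) ^ (-n) := by
  rw [norm_zpow, hord ϖ hϖ0, hϖ1, ← zpow_mul]
  ring_nf

variable [IsUltrametricDist K]

theorem integrand_eqOn_ball (hq : 1 < q) (hord : ∀ x : K, x ≠ 0 → ‖x‖ = (q : ℝ) ^ (-ord x))
    (hϖ0 : ϖ ≠ 0) (hϖ1 : ord ϖ = 1) (Ψ : K → ℂ) (n : ℤ) {a : K} (ha : ‖a‖ = 1) :
    Set.EqOn (fun x => Ψ x * nuHalf x * sgnP ord ϖ x * (‖x‖ : ℂ)⁻¹)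
      (fun x => (Real.sqrt ‖ϖ ^ n‖ * (‖ϖ ^ n‖ : ℂ)⁻¹ * etaK (-1 : K) ^ n * etaK a) * Ψ x)
      (ball (ϖ ^ n * a) ‖ϖ ^ n‖) := by
  intro x hx
  rw [mem_ball, dist_eq_norm] at hx
  have hca : ‖ϖ ^ n * a‖ = ‖ϖ ^ n‖ := by rw [norm_mul, ha, mul_one]
  have hxn : ‖x‖ = ‖ϖ ^ n‖ := hca ▸ IsUltrametricDist.norm_eq_of_norm_sub_lt_right (hca ▸ hx)
  have hϖn : ϖ ^ n ≠ 0 := zpow_ne_zero n hϖ0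
  have hx0 : x ≠ 0 := norm_ne_zero_iff.mp (hxn ▸ norm_ne_zero_iff.mpr hϖn)
  have hord_x : ord x = n :=
    ord_eq_of_norm_eq hq hord hx0 (hxn.trans (norm_zpow_eq_zpow_neg hord hϖ0 hϖ1 n))
  have hη : etaK (x * ϖ ^ (-n)) = etaK a := by
    have h : x * ϖ ^ (-n) - a = (x - ϖ ^ n * a) * (ϖ ^ n)⁻¹ := by
      rw [zpow_neg, sub_mul, mul_right_comm, mul_inv_cancel₀ hϖn, one_mul]
    refine etaK_congr ?_
    rwa [h, norm_mul, norm_inv, ← div_eq_mul_inv, div_lt_one (norm_pos_iff.mpr hϖn)]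
  simp only [sgnP, nuHalf, hord_x, hη, hxn]
  ring

theorem setIntegral_setOf_ord_eq [ProperSpace K] [MeasurableSpace K] [BorelSpace K]
    (hq : 1 < q) (hord : ∀ x : K, x ≠ 0 → ‖x‖ = (q : ℝ) ^ (-ord x)) (hϖ0 : ϖ ≠ 0)
    (hϖ1 : ord ϖ = 1) {R : Finset K} (hR : IsResidueSystem R) (μ : Measure K)
    [μ.IsAddHaarMeasure] {Ψ : AddChar K ℂ} (hΨ : Continuous Ψ) (n : ℤ) :
    ∫ x in {x : K | x ≠ 0 ∧ ord x = n}, Ψ x * nuHalf x * sgnP ord ϖ x * (‖x‖ : ℂ)⁻¹ ∂μ =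
      Real.sqrt ‖ϖ ^ n‖ * (‖ϖ ^ n‖ : ℂ)⁻¹ * etaK (-1 : K) ^ n *
        (∑ a ∈ R with ‖a‖ = 1, etaK a * Ψ (ϖ ^ n * a)) * ∫ x in ball 0 ‖ϖ ^ n‖, Ψ x ∂μ := by
  rw [setOf_ord_eq_sphere hq hord, ← norm_zpow_eq_zpow_neg hord hϖ0 hϖ1,
    hR.setIntegral_sphere μ hΨ (zpow_ne_zero n hϖ0) _
      fun a _ ha => integrand_eqOn_ball hq hord hϖ0 hϖ1 Ψ n ha, Finset.mul_sum]
  congr 1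
  exact Finset.sum_congr rfl fun a _ => by ring

end Uniformizer

section ResidueField

open IsLocalRing IsUltrametricDist
open scoped NormedField Valued

variable [NontriviallyNormedField K] [IsUltrametricDist K]

theorem residue_eq_zero_iff_norm_lt_one (x : 𝒪[K]) : residue 𝒪[K] x = 0 ↔ ‖(x : K)‖ < 1 := by
  rw [residue_eq_zero_iff, mem_maximalIdeal, mem_nonunits_iff,
    Valued.integer.isUnit_iff_norm_eq_one]
  exact (Valued.integer.norm_le_one x).lt_iff_ne.symm

theorem residue_eq_residue_iff (x y : 𝒪[K]) :
    residue 𝒪[K] x = residue 𝒪[K] y ↔ ‖(x : K) - y‖ < 1 := by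
  rw [← sub_eq_zero, ← map_sub, residue_eq_zero_iff_norm_lt_one]
  rfl

namespace IsResidueSystem

variable {R : Finset K}

theorem exists_residue_eq (hR : IsResidueSystem R) (u : 𝓀[K]) :
    ∃ x : 𝒪[K], (x : K) ∈ R ∧ residue 𝒪[K] x = u := by
  obtain ⟨y, rfl⟩ := residue_surjective u
  obtain ⟨a, ⟨haR, hya⟩, -⟩ := hR.2 y (Valued.integer.norm_le_one y)
  exact ⟨⟨a, Valued.integer.mem_iff.mpr (hR.1 a haR)⟩, haR,
    (residue_eq_residue_iff _ _).mpr (by rwa [norm_sub_rev])⟩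

theorem finite_residueField (hR : IsResidueSystem R) : Finite 𝓀[K] := by
  refine Finite.of_surjective (fun a : R => residue 𝒪[K] ⟨a, Valued.integer.mem_iff.mpr
    (hR.1 a a.2)⟩) fun u => ?_
  obtain ⟨x, hxR, rfl⟩ := hR.exists_residue_eq u
  exact ⟨⟨x, hxR⟩, rfl⟩

variable [Fintype 𝓀[K]]

theorem sum_eq {M : Type*} [AddCommMonoid M] (hR : IsResidueSystem R) (f : K → M)
    (g : 𝓀[K] → M) (hfg : ∀ x : 𝒪[K], f x = g (residue 𝒪[K] x)) :
    ∑ a ∈ R, f a = ∑ u, g u := by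
  refine Finset.sum_bij (fun a ha => residue 𝒪[K] ⟨a, Valued.integer.mem_iff.mpr (hR.1 a ha)⟩)
    (fun _ _ => Finset.mem_univ _) (fun a ha b hb hab => ?_) (fun u _ => ?_)
    (fun a _ => hfg ⟨a, _⟩)
  · exact hR.eq_of_norm_sub_lt_one ha hb ((residue_eq_residue_iff _ _).mp hab)
  · obtain ⟨x, hxR, rfl⟩ := hR.exists_residue_eq u
    exact ⟨x, hxR, rfl⟩

theorem sum_filter_norm_eq_one {M : Type*} [AddCommMonoid M] (hR : IsResidueSystem R)
    (f : K → M) (g : 𝓀[K] → M) (hg : g 0 = 0)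
    (hfg : ∀ x : 𝒪[K], ‖(x : K)‖ = 1 → f x = g (residue 𝒪[K] x)) :
    ∑ a ∈ R with ‖a‖ = 1, f a = ∑ u, g u := by
  rw [Finset.sum_filter]
  refine hR.sum_eq _ _ fun x => ?_
  split_ifs with hx
  · exact hfg x hx
  · rw [(residue_eq_zero_iff_norm_lt_one x).mpr
      ((Valued.integer.norm_le_one x).lt_of_ne hx), hg]

theorem card_residueField (hR : IsResidueSystem R) : Fintype.card 𝓀[K] = R.card := by
  simpa using (hR.sum_eq (M := ℕ) (fun _ => 1) (fun _ => 1) fun _ => rfl).symm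

theorem ringChar_ne_two (hR : IsResidueSystem R) (hodd : Odd R.card) : ringChar 𝓀[K] ≠ 2 := by
  rw [Ne, FiniteField.even_card_iff_char_two, hR.card_residueField, ← Nat.even_iff,
    Nat.not_even_iff_odd]
  exact hodd

end IsResidueSystem

theorem IsResidueSystem.card_eq_card {R R' : Finset K} (hR : IsResidueSystem R)
    (hR' : IsResidueSystem R') : R.card = R'.card := by
  have : Fintype 𝓀[K] := @Fintype.ofFinite _ hR.finite_residueField
  rw [← hR.card_residueField, hR'.card_residueField]

theorem etaK_eq_quadraticChar [Fintype 𝓀[K]] [DecidableEq 𝓀[K]] {x : 𝒪[K]}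
    (hx : ‖(x : K)‖ = 1) : etaK (x : K) = quadraticChar 𝓀[K] (residue 𝒪[K] x) := by
  have hsq : (∃ y : K, ‖y * y - x‖ < 1) ↔ IsSquare (residue 𝒪[K] x) := by
    constructor
    · rintro ⟨y, hy⟩
      have hyy : ‖y * y‖ = 1 := hx ▸ norm_eq_of_norm_sub_lt_right (hx ▸ hy)
      have hy1 : ‖y‖ ≤ 1 := by
        rw [norm_mul] at hyy
        nlinarith [norm_nonneg y]
      refine ⟨residue 𝒪[K] ⟨y, Valued.integer.mem_iff.mpr hy1⟩, ?_⟩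
      rw [← map_mul, eq_comm, residue_eq_residue_iff]
      exact hy
    · rintro ⟨r, hr⟩
      obtain ⟨y, rfl⟩ := residue_surjective r
      rw [← map_mul, eq_comm, residue_eq_residue_iff] at hr
      exact ⟨y, hr⟩
  have hx0 : residue 𝒪[K] x ≠ 0 := by
    rw [Ne, residue_eq_zero_iff_norm_lt_one, hx]
    exact lt_irrefl 1
  unfold etaK
  split_ifs with h
  · rw [(quadraticChar_one_iff_isSquare hx0).mpr (hsq.mp h)]
    norm_num
  · rw [quadraticChar_neg_one_iff_not_isSquare.mpr (mt hsq.mpr h)]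
    norm_num

theorem IsResidueSystem.sum_etaK_eq_zero [Fintype 𝓀[K]] [DecidableEq 𝓀[K]] {R : Finset K}
    (hR : IsResidueSystem R) (hF : ringChar 𝓀[K] ≠ 2) : ∑ a ∈ R with ‖a‖ = 1, etaK a = 0 := by
  rw [hR.sum_filter_norm_eq_one etaK (fun u => (quadraticChar 𝓀[K] u : ℂ)) (by simp)
    fun x hx => etaK_eq_quadraticChar hx]
  exact_mod_cast quadraticChar_sum_zero hF

theorem AddChar.exists_comp_residue {M : Type*} [CommMonoid M] (φ : AddChar K M)
    (hφ : ∀ z : K, ‖z‖ < 1 → φ z = 1) :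
    ∃ ψ : AddChar 𝓀[K] M, ∀ x : 𝒪[K], ψ (residue 𝒪[K] x) = φ x := by
  have hres : ∀ x y : 𝒪[K], residue 𝒪[K] x = residue 𝒪[K] y → φ x = φ y := by
    intro x y h
    rw [← sub_add_cancel (x : K) y, AddChar.map_add_eq_mul,
      hφ _ ((residue_eq_residue_iff x y).mp h), one_mul]
  let s := Function.surjInv (residue_surjective (R := 𝒪[K]))
  have hs : ∀ u, residue 𝒪[K] (s u) = u := Function.surjInv_eq _
  refine ⟨⟨fun u => φ (s u), ?_, fun u v => ?_⟩, fun x => hres _ _ (hs _)⟩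
  · rw [hres (s 0) 0 (by rw [hs, map_zero]), ZeroMemClass.coe_zero, AddChar.map_zero_eq_one]
  · rw [hres (s (u + v)) (s u + s v) (by rw [map_add, hs, hs, hs]), Subring.coe_add,
      AddChar.map_add_eq_mul]

theorem exists_residue_addChar_ne_zero
    {q : ℕ} {ord : K → ℤ} {ϖ : K} (hq : 1 < q)
    (hord : ∀ x : K, x ≠ 0 → ‖x‖ = (q : ℝ) ^ (-ord x)) (hϖ0 : ϖ ≠ 0) (hϖ1 : ord ϖ = 1)
    (Ψ : AddChar K ℂ) (hΨ1 : ∀ x : K, ‖x‖ ≤ 1 → Ψ x = 1)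
    (hΨ2 : ∃ x : K, x ∈ pSet q (-1) ∧ Ψ x ≠ 1) :
    ∃ ψ : AddChar 𝓀[K] ℂ, ψ ≠ 0 ∧ ∀ x : 𝒪[K], ψ (residue 𝒪[K] x) = Ψ (ϖ⁻¹ * x) := by
  have hq0 : (0 : ℝ) < q := by positivity
  have hϖ : ‖ϖ‖ = (q : ℝ)⁻¹ := by simpa using norm_zpow_eq_zpow_neg hord hϖ0 hϖ1 1
  obtain ⟨ψ, hψ⟩ := (Ψ.mulShift ϖ⁻¹).exists_comp_residue fun z hz => by
    have hz' : ‖z‖ ≤ (q : ℝ)⁻¹ := by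
      simpa using norm_le_zpow_of_norm_lt hq hord (m := -1) (by simpa using hz)
    refine (AddChar.mulShift_apply (ψ := Ψ)).trans (hΨ1 _ ?_)
    rw [norm_mul, norm_inv, hϖ, inv_inv]
    calc (q : ℝ) * ‖z‖ ≤ q * (q : ℝ)⁻¹ := by gcongr
      _ = 1 := mul_inv_cancel₀ hq0.ne'
  refine ⟨ψ, fun h => ?_, hψ⟩
  obtain ⟨z, hz, hΨz⟩ := hΨ2
  have hϖz : ‖ϖ * z‖ ≤ 1 := by
    have hz' : ‖z‖ ≤ q := by simpa [pSet] using hz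
    rw [norm_mul, hϖ]
    calc (q : ℝ)⁻¹ * ‖z‖ ≤ (q : ℝ)⁻¹ * q := by gcongr
      _ = 1 := inv_mul_cancel₀ hq0.ne'
  have := hψ ⟨ϖ * z, Valued.integer.mem_iff.mpr hϖz⟩
  rw [h, AddChar.zero_apply, AddChar.mulShift_apply, inv_mul_cancel_left₀ hϖ0] at this
  exact hΨz this.symm

section Evaluation

variable {q : ℕ} {ord : K → ℤ} {ϖ : K} {R : Finset K}

theorem IsResidueSystem.sum_addChar_neg_sq [Fintype 𝓀[K]] [DecidableEq 𝓀[K]]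
    (hR : IsResidueSystem R) (hF : ringChar 𝓀[K] ≠ 2) {Ψ : AddChar K ℂ} {ψ : AddChar 𝓀[K] ℂ}
    (hψ0 : ψ ≠ 0) (hψ : ∀ x : 𝒪[K], ψ (residue 𝒪[K] x) = Ψ (ϖ⁻¹ * x)) :
    ∑ X ∈ R, Ψ ((-ϖ) ^ (-1 : ℤ) * X ^ 2) =
      quadraticChar 𝓀[K] (-1) *
        gaussSum ((quadraticChar 𝓀[K]).ringHomComp (Int.castRingHom ℂ)) ψ := by
  rw [hR.sum_eq _ (fun v => ψ (-1 * v ^ 2)) fun x => ?_,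
    sum_addChar_mul_sq hF hψ0 (neg_ne_zero.mpr one_ne_zero)]
  rw [← map_one (residue 𝒪[K]), ← map_neg, ← map_pow, ← map_mul, hψ, zpow_neg_one, inv_neg]
  push_cast
  ring_nf

theorem setIntegral_setOf_ord_eq_zero [ProperSpace K] [MeasurableSpace K] [BorelSpace K]
    (hq : 1 < q) (hord : ∀ x : K, x ≠ 0 → ‖x‖ = (q : ℝ) ^ (-ord x))
    (hϖ0 : ϖ ≠ 0) (hϖ1 : ord ϖ = 1) (hR : IsResidueSystem R) (hodd : Odd R.card)
    (μ : Measure K) [μ.IsAddHaarMeasure] {Ψ : AddChar K ℂ} (hΨ : Continuous Ψ)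
    (hΨ1 : ∀ x : K, ‖x‖ ≤ 1 → Ψ x = 1) (hΨ2 : ∃ x : K, x ∈ pSet q (-1) ∧ Ψ x ≠ 1)
    {n : ℤ} (hn : n ≠ -1) :
    ∫ x in {x : K | x ≠ 0 ∧ ord x = n}, Ψ x * nuHalf x * sgnP ord ϖ x * (‖x‖ : ℂ)⁻¹ ∂μ = 0 := by
  have hq' : (1 : ℝ) < q := by exact_mod_cast hq
  rw [setIntegral_setOf_ord_eq hq hord hϖ0 hϖ1 hR μ hΨ n]
  rcases hn.lt_or_gt with hn | hn
  · obtain ⟨z, hz, hΨz⟩ := hΨ2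
    have hz' : ‖z‖ < ‖ϖ ^ n‖ := by
      rw [norm_zpow_eq_zpow_neg hord hϖ0 hϖ1]
      exact (show ‖z‖ ≤ (q : ℝ) ^ (1 : ℤ) by simpa [pSet] using hz).trans_lt
        (zpow_lt_zpow_right₀ hq' (by omega))
    rw [Ψ.setIntegral_ball_eq_zero μ hz' hΨz, mul_zero]
  · have hΨa (a : K) (ha : ‖a‖ = 1) : etaK a * Ψ (ϖ ^ n * a) = etaK a := by
      rw [hΨ1 _ ?_, mul_one]
      rw [norm_mul, ha, mul_one, norm_zpow_eq_zpow_neg hord hϖ0 hϖ1]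
      exact zpow_le_one_of_nonpos₀ hq'.le (by omega)
    have : Fintype 𝓀[K] := @Fintype.ofFinite _ hR.finite_residueField
    rw [Finset.sum_congr rfl fun a ha => hΨa a (Finset.mem_filter.mp ha).2,
      hR.sum_etaK_eq_zero (hR.ringChar_ne_two hodd), mul_zero, zero_mul]

theorem setIntegral_setOf_ord_eq_neg_one_eq_mul_gaussSum [Fintype 𝓀[K]] [DecidableEq 𝓀[K]]
    [ProperSpace K] [MeasurableSpace K] [BorelSpace K] (hq : 1 < q)
    (hord : ∀ x : K, x ≠ 0 → ‖x‖ = (q : ℝ) ^ (-ord x)) (hϖ0 : ϖ ≠ 0) (hϖ1 : ord ϖ = 1)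
    (hR : IsResidueSystem R) (μ : Measure K) [μ.IsAddHaarMeasure]
    (hμO : μ {x : K | ‖x‖ ≤ 1} = 1) {Ψ : AddChar K ℂ} (hΨ : Continuous Ψ)
    (hΨ1 : ∀ x : K, ‖x‖ ≤ 1 → Ψ x = 1) {ψ : AddChar 𝓀[K] ℂ}
    (hψ : ∀ x : 𝒪[K], ψ (residue 𝒪[K] x) = Ψ (ϖ⁻¹ * x)) :
    ∫ x in {x : K | x ≠ 0 ∧ ord x = -1}, Ψ x * nuHalf x * sgnP ord ϖ x * (‖x‖ : ℂ)⁻¹ ∂μ =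
      (Real.sqrt q : ℂ)⁻¹ * etaK (-1 : K) *
        gaussSum ((quadraticChar 𝓀[K]).ringHomComp (Int.castRingHom ℂ)) ψ := by
  have hq' : (1 : ℝ) < q := by exact_mod_cast hq
  have hϖ : ‖ϖ ^ (-1 : ℤ)‖ = q := by simpa using norm_zpow_eq_zpow_neg hord hϖ0 hϖ1 (-1)
  have hO : ball (0 : K) q = {x | ‖x‖ ≤ 1} := by
    ext x
    rw [mem_ball_zero_iff, Set.mem_ofPred_eq]
    exact ⟨fun h => by simpa using norm_le_zpow_of_norm_lt hq hord (m := 0) (by simpa using h),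
      fun h => h.trans_lt hq'⟩
  have hball : ∫ x in ball 0 ‖ϖ ^ (-1 : ℤ)‖, Ψ x ∂μ = 1 := by
    rw [hϖ, hO, setIntegral_congr_fun (measurableSet_le measurable_norm measurable_const) hΨ1,
      setIntegral_const, measureReal_def, hμO]
    simp
  have hsum : ∑ a ∈ R with ‖a‖ = 1, etaK a * Ψ (ϖ ^ (-1 : ℤ) * a) =
      gaussSum ((quadraticChar 𝓀[K]).ringHomComp (Int.castRingHom ℂ)) ψ :=
    hR.sum_filter_norm_eq_one _ (fun u => quadraticChar 𝓀[K] u * ψ u) (by simp) fun x hx => by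
      rw [etaK_eq_quadraticChar hx, hψ, zpow_neg_one]
  have hsqrt : (Real.sqrt q : ℂ) * (q : ℂ)⁻¹ = (Real.sqrt q : ℂ)⁻¹ := by
    have hs : (Real.sqrt q : ℂ) ≠ 0 := by exact_mod_cast (Real.sqrt_pos.mpr (by positivity)).ne'
    have hq2 : (q : ℂ) = Real.sqrt q * Real.sqrt q := by
      exact_mod_cast (Real.mul_self_sqrt (Nat.cast_nonneg q)).symm
    rw [hq2]
    field_simp
  rw [setIntegral_setOf_ord_eq hq hord hϖ0 hϖ1 hR μ hΨ, hball, hsum, hϖ, zpow_neg_one, etaK_inv]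
  push_cast
  rw [hsqrt, mul_one]

theorem setIntegral_setOf_ord_eq_neg_one [ProperSpace K] [MeasurableSpace K] [BorelSpace K]
    (hq : 1 < q) (hord : ∀ x : K, x ≠ 0 → ‖x‖ = (q : ℝ) ^ (-ord x)) (hϖ0 : ϖ ≠ 0)
    (hϖ1 : ord ϖ = 1) (hR : IsResidueSystem R) (hodd : Odd R.card) (μ : Measure K)
    [μ.IsAddHaarMeasure] (hμO : μ {x : K | ‖x‖ ≤ 1} = 1) {Ψ : AddChar K ℂ}
    (hΨ : Continuous Ψ) (hΨ1 : ∀ x : K, ‖x‖ ≤ 1 → Ψ x = 1)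
    (hΨ2 : ∃ x : K, x ∈ pSet q (-1) ∧ Ψ x ≠ 1) :
    ∫ x in {x : K | x ≠ 0 ∧ ord x = -1}, Ψ x * nuHalf x * sgnP ord ϖ x * (‖x‖ : ℂ)⁻¹ ∂μ =
      gaussSumK q Ψ ϖ (-1) R := by
  have : Fintype 𝓀[K] := @Fintype.ofFinite _ hR.finite_residueField
  obtain ⟨ψ, hψ0, hψ⟩ := exists_residue_addChar_ne_zero hq hord hϖ0 hϖ1 Ψ hΨ1 hΨ2
  have hη : etaK (-1 : K) = quadraticChar 𝓀[K] (-1) := by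
    simpa using etaK_eq_quadraticChar (K := K) (x := -1) (by simp)
  rw [setIntegral_setOf_ord_eq_neg_one_eq_mul_gaussSum hq hord hϖ0 hϖ1 hR μ hμO hΨ hΨ1 hψ,
    gaussSumK, hR.sum_addChar_neg_sq (hR.ringChar_ne_two hodd) hψ0 hψ, hη, mul_assoc]

end Evaluation

end ResidueField

theorem gamma_factor_evaluation_general
    [NontriviallyNormedField K] [IsUltrametricDist K]
    [LocallyCompactSpace K] [MeasurableSpace K] [BorelSpace K]
    (q : ℕ) (hq_odd : Odd q) (hq_one : 1 < q)
    (hfin : ∃ R : Finset K, IsResidueSystem R ∧ R.card = q)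
    (ord : K → ℤ) (hord : ∀ x : K, x ≠ 0 → ‖x‖ = (q : ℝ) ^ (-ord x))
    (ϖ : K) (hϖ0 : ϖ ≠ 0) (hϖ1 : ord ϖ = 1)
    (μ : Measure K) [μ.IsAddHaarMeasure] (hμO : μ {x : K | ‖x‖ ≤ 1} = 1)
    (Ψ : K → ℂ) (hΨadd : ∀ x y : K, Ψ (x + y) = Ψ x * Ψ y)
    (hΨ1 : ∀ x : K, ‖x‖ ≤ 1 → Ψ x = 1)
    (hΨ2 : ∃ x : K, x ∈ pSet q (-1) ∧ Ψ x ≠ 1) :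
    (∀ n : ℤ, n ≠ -1 →
        ∫ x in {x : K | x ≠ 0 ∧ ord x = n},
          Ψ x * nuHalf x * sgnP ord ϖ x * (‖x‖ : ℂ)⁻¹ ∂μ = 0) ∧
    ∀ R : Finset K, IsResidueSystem R →
      (∑' n : ℤ, ∫ x in {x : K | x ≠ 0 ∧ ord x = n},
          Ψ x * nuHalf x * sgnP ord ϖ x * (‖x‖ : ℂ)⁻¹ ∂μ) =
        gaussSumK q Ψ ϖ (-1) R := by
  obtain ⟨R₀, hR₀, hR₀card⟩ := hfin
  have : ProperSpace K := .of_locallyCompactSpace K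
  obtain ⟨Ψ, rfl⟩ : ∃ Ψ' : AddChar K ℂ, ⇑Ψ' = Ψ := ⟨⟨Ψ, hΨ1 0 (by simp), hΨadd⟩, rfl⟩
  have hΨ : Continuous Ψ := Ψ.continuous_of_eventually_eq_one <|
    eventually_of_mem (closedBall_mem_nhds 0 one_pos) fun x hx =>
      hΨ1 x (mem_closedBall_zero_iff.mp hx)
  have hvanish (n : ℤ) (hn : n ≠ -1) :=
    setIntegral_setOf_ord_eq_zero hq_one hord hϖ0 hϖ1 hR₀ (hR₀card ▸ hq_odd) μ hΨ hΨ1 hΨ2 hn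
  refine ⟨hvanish, fun R hR => ?_⟩
  rw [tsum_eq_single (-1) hvanish]
  exact setIntegral_setOf_ord_eq_neg_one hq_one hord hϖ0 hϖ1 hR
    (hR.card_eq_card hR₀ ▸ hR₀card ▸ hq_odd) μ hμO hΨ hΨ1 hΨ2

/-- evaluation of the Γ-factor `Γ(ν^{1/2} sgn_ϖ)`: all shells other than
the shell `ord x = -1` contribute `0`, and the principal-value integral equals the
normalized Gauss sum. -/
theorem gamma_factor_evaluation
    [NontriviallyNormedField K] [IsUltrametricDist K]
    [CompleteSpace K] [LocallyCompactSpace K] [MeasurableSpace K] [BorelSpace K]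
    (q : ℕ) (hq_odd : Odd q) (hq_one : 1 < q)
    (hfin : ∃ R : Finset K, IsResidueSystem R ∧ R.card = q)
    (ord : K → ℤ) (hord : ∀ x : K, x ≠ 0 → ‖x‖ = (q : ℝ) ^ (-ord x))
    (ϖ : K) (hϖ0 : ϖ ≠ 0) (hϖ1 : ord ϖ = 1)
    (μ : Measure K) [μ.IsAddHaarMeasure] (hμO : μ {x : K | ‖x‖ ≤ 1} = 1)
    (Ψ : K → ℂ) (hΨadd : ∀ x y : K, Ψ (x + y) = Ψ x * Ψ y)
    (hΨ1 : ∀ x : K, ‖x‖ ≤ 1 → Ψ x = 1)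
    (hΨ2 : ∃ x : K, x ∈ pSet q (-1) ∧ Ψ x ≠ 1) :
    (∀ n : ℤ, n ≠ -1 →
        ∫ x in {x : K | x ≠ 0 ∧ ord x = n},
          Ψ x * nuHalf x * sgnP ord ϖ x * (‖x‖ : ℂ)⁻¹ ∂μ = 0) ∧
    ∀ R : Finset K, IsResidueSystem R →
      (∑' n : ℤ, ∫ x in {x : K | x ≠ 0 ∧ ord x = n},
          Ψ x * nuHalf x * sgnP ord ϖ x * (‖x‖ : ℂ)⁻¹ ∂μ) =
        gaussSumK q Ψ ϖ (-1) R :=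
  gamma_factor_evaluation_general q hq_odd hq_one hfin ord hord ϖ hϖ0 hϖ1 μ hμO Ψ hΨadd hΨ1 hΨ2
end
end
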